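/- Let S ⊆ ℕ_0^d be an almost symmetric GNS and n ∈ S with n ≠ 0. Then Maximals_{≤_S} Ap(S,n) = Maximals_{≤_S} C(S,n). -/

import Mathlib

open scoped BigOperators

/-- A generalized numerical semigroup: a submonoid of `ℕ^d` with finite complement. -/
def IsGNS {d : ℕ} (S : Set (Fin d → ℕ)) : Prop :=
  (0 : Fin d → ℕ) ∈ S ∧ (∀ x y : Fin d → ℕ, x ∈ S → y ∈ S → x + y ∈ S) ∧ Sᶜ.Finite

/-- The genus: number of gaps. -/
noncomputable def genus {d : ℕ} (S : Set (Fin d → ℕ)) : ℕ := Sᶜ.ncard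

/-- Pseudo-Frobenius elements. -/
def PF {d : ℕ} (S : Set (Fin d → ℕ)) : Set (Fin d → ℕ) :=
  {h | h ∉ S ∧ ∀ s ∈ S, s ≠ 0 → h + s ∈ S}

/-- The type: number of pseudo-Frobenius elements. -/
noncomputable def typ {d : ℕ} (S : Set (Fin d → ℕ)) : ℕ := (PF S).ncard

/-- Maximal elements of a set with respect to a relation. -/
def Maximals {α : Type*} (le : α → α → Prop) (X : Set α) : Set α :=
  {x ∈ X | ∀ y ∈ X, le x y → x = y}

/-- `f` is the unique maximal element of the set of gaps w.r.t. the componentwise order. -/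
def IsFrobenius {d : ℕ} (S : Set (Fin d → ℕ)) (f : Fin d → ℕ) : Prop :=
  Maximals (· ≤ ·) Sᶜ = {f}

/-- Almost symmetric: `2 g(S) + 1 - t(S) = ∏ (h i + 1)` for some gap `h`. -/
def AlmostSymmetric {d : ℕ} (S : Set (Fin d → ℕ)) : Prop :=
  ∃ h ∉ S, 2 * genus S + 1 = typ S + ∏ i, (h i + 1)

/-- Special gaps. -/
def SG {d : ℕ} (S : Set (Fin d → ℕ)) : Set (Fin d → ℕ) :=
  {h ∈ PF S | h + h ∈ S}

/-- The partial order `≤_S` : `y ≤_S x` iff `x - y ∈ S`. -/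
def leS {d : ℕ} (S : Set (Fin d → ℕ)) (x y : Fin d → ℕ) : Prop :=
  ∃ s ∈ S, x + s = y

/-- The Apéry set of `S` with respect to `n`. -/
def Ap {d : ℕ} (S : Set (Fin d → ℕ)) (n : Fin d → ℕ) : Set (Fin d → ℕ) :=
  {s ∈ S | ¬ ∃ u ∈ S, u + n = s}

/-- The reduced Apéry set of `S` with respect to `n`. -/
def Cred {d : ℕ} (S : Set (Fin d → ℕ)) (n : Fin d → ℕ) : Set (Fin d → ℕ) :=
  {s ∈ Ap S n | ∃ h, h ∉ S ∧ s ≤ h + n}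

/-- A monomial order on `ℕ^d` given by its strict-order relation. -/
def IsMonomialOrder (d : ℕ) (lt : (Fin d → ℕ) → (Fin d → ℕ) → Prop) : Prop :=
  (∀ a, ¬ lt a a) ∧ (∀ a b c, lt a b → lt b c → lt a c) ∧
  (∀ a b, a ≠ b → lt a b ∨ lt b a) ∧
  (∀ u a b, lt a b → lt (a + u) (b + u)) ∧
  (∀ a, a ≠ (0 : Fin d → ℕ) → lt 0 a)

/-- Minimal generator of a GNS. -/
def IsMinGen {d : ℕ} (S : Set (Fin d → ℕ)) (x : Fin d → ℕ) : Prop :=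
  x ∈ S ∧ x ≠ 0 ∧ ∀ y ∈ S, ∀ z ∈ S, y ≠ 0 → z ≠ 0 → y + z ≠ x

/-- Irreducible GNS: not an intersection of two GNSs properly containing it. -/
def GNSIrreducible {d : ℕ} (S : Set (Fin d → ℕ)) : Prop :=
  ¬ ∃ S₁ S₂ : Set (Fin d → ℕ), IsGNS S₁ ∧ IsGNS S₂ ∧ S ⊂ S₁ ∧ S ⊂ S₂ ∧ S = S₁ ∩ S₂

/-- Pseudo-symmetric: `PF S = {f, f/2}`. -/
def PseudoSymmetric {d : ℕ} (S : Set (Fin d → ℕ)) : Prop :=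
  ∃ f q : Fin d → ℕ, f ≠ q ∧ q + q = f ∧ PF S = {f, q}

/- In an almost symmetric GNS with witness gap `h`, count the box `[0, h]`: reflection `x ↦ h - x`
sends its elements of `S` injectively to gaps, and the pseudo-Frobenius elements other than `h`
are gaps outside the box or gaps whose reflection is again a gap. This gives
`2 g + 1 - t ≥ |h + 1|_× + #(gaps outside the box)`, so equality forces every gap to lie below `h`
and every gap `x` with `h - x` a gap to be pseudo-Frobenius.

The maximal elements of `Ap(S, n)` are exactly the `f + n` with `f ∈ PF(S)`. Each such `f` lies below
`h`, so `f + n ∈ C(S, n)`. Conversely, if `x` is maximal in `C(S, n)`, either `x ≤_S h + n`, forcing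
`x = h + n`, or `x = v + n` with `v` a gap whose reflection `h - v` is a gap, so `v ∈ PF(S)`. -/

variable {d : ℕ} {S : Set (Fin d → ℕ)}

/-- Nari's set `L(S)` relative to the gap `h`. -/
def reflectedGaps (S : Set (Fin d → ℕ)) (h : Fin d → ℕ) : Set (Fin d → ℕ) :=
  {x | x ∉ S ∧ x ≤ h ∧ h - x ∉ S}

lemma ncard_Iic_eq_prod (h : Fin d → ℕ) : (Set.Iic h).ncard = ∏ i, (h i + 1) := by
  rw [← Finset.coe_Iic, Set.ncard_coe_finset, Pi.card_Iic]
  simp [Nat.card_Iic]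

lemma ncard_Iic_sdiff_eq (hS : IsGNS S) {h : Fin d → ℕ} (hh : h ∉ S) :
    (Set.Iic h \ S).ncard = (Set.Iic h ∩ S).ncard + (reflectedGaps S h).ncard := by
  have hreflect : Set.Iic h \ S = (h - ·) '' (Set.Iic h ∩ S) ∪ reflectedGaps S h := by
    ext x
    constructor
    · rintro ⟨hxh, hxS⟩
      by_cases hhx : h - x ∈ S
      · exact Or.inl ⟨h - x, ⟨Set.mem_Iic.mpr tsub_le_self, hhx⟩, tsub_tsub_cancel_of_le hxh⟩
      · exact Or.inr ⟨hxS, hxh, hhx⟩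
    · rintro (⟨y, ⟨hyh, hyS⟩, rfl⟩ | ⟨hxS, hxh, -⟩)
      · refine ⟨Set.mem_Iic.mpr tsub_le_self, fun hc => hh ?_⟩
        rw [← add_tsub_cancel_of_le (Set.mem_Iic.mp hyh)]
        exact hS.2.1 _ _ hyS hc
      · exact ⟨hxh, hxS⟩
  have hdisj : Disjoint ((h - ·) '' (Set.Iic h ∩ S)) (reflectedGaps S h) := by
    rw [Set.disjoint_left]
    rintro _ ⟨y, ⟨hyh, hyS⟩, rfl⟩ ⟨-, -, hc⟩
    exact hc (by rwa [tsub_tsub_cancel_of_le hyh])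
  have hinj : Set.InjOn (h - ·) (Set.Iic h ∩ S) := fun a ha b hb hab => by
    rw [← tsub_tsub_cancel_of_le (Set.mem_Iic.mp ha.1),
      ← tsub_tsub_cancel_of_le (Set.mem_Iic.mp hb.1)]
    exact congrArg (h - ·) hab
  have hfin : (Set.Iic h ∩ S).Finite := (Set.finite_Iic h).inter_of_left S
  rw [hreflect, Set.ncard_union_eq hdisj (hfin.image _)
    ((Set.finite_Iic h).subset fun x hx => hx.2.1), hinj.ncard_image]

lemma PF_subset_insert (h : Fin d → ℕ) (hh : h ∉ S) :
    PF S ⊆ insert h (reflectedGaps S h ∪ (Sᶜ \ Set.Iic h)) := by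
  intro f hf
  by_cases hfh : f = h
  · exact Or.inl hfh
  by_cases hfB : f ≤ h
  · refine Or.inr (Or.inl ⟨hf.1, hfB, fun hc => hh ?_⟩)
    have hne : h - f ≠ 0 := fun h0 => hfh (le_antisymm hfB (tsub_eq_zero_iff_le.mp h0))
    rw [← add_tsub_cancel_of_le hfB]
    exact hf.2 _ hc hne
  · exact Or.inr (Or.inr ⟨hf.1, hfB⟩)

lemma two_mul_genus_add_one_eq (hS : IsGNS S) {h : Fin d → ℕ} (hh : h ∉ S) :
    2 * genus S + 1 = (insert h (reflectedGaps S h ∪ (Sᶜ \ Set.Iic h))).ncard +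
      ∏ i, (h i + 1) + (Sᶜ \ Set.Iic h).ncard := by
  have hgenus := Set.ncard_inter_add_ncard_sdiff_eq_ncard Sᶜ (Set.Iic h) hS.2.2
  have hbox := Set.ncard_inter_add_ncard_sdiff_eq_ncard (Set.Iic h) S (Set.finite_Iic h)
  have hreflect := ncard_Iic_sdiff_eq hS hh
  have hh' : h ∉ reflectedGaps S h ∪ (Sᶜ \ Set.Iic h) := by
    rintro (⟨-, -, hc⟩ | ⟨-, hc⟩)
    · exact hc (by simpa using hS.1)
    · exact hc (Set.mem_Iic.mpr le_rfl)
  have hdisj : Disjoint (reflectedGaps S h) (Sᶜ \ Set.Iic h) :=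
    Set.disjoint_left.mpr fun x hx hx' => hx'.2 hx.2.1
  have hfinR : (reflectedGaps S h).Finite := (Set.finite_Iic h).subset fun x hx => hx.2.1
  have hfinO : (Sᶜ \ Set.Iic h).Finite := hS.2.2.sdiff
  rw [Set.ncard_insert_of_notMem hh' (hfinR.union hfinO), Set.ncard_union_eq hdisj hfinR hfinO,
    ← ncard_Iic_eq_prod, genus, ← hgenus, Set.inter_comm, ← Set.sdiff_eq]
  omega

lemma AlmostSymmetric.exists_PF_eq_insert (hS : IsGNS S) (hAS : AlmostSymmetric S) :
    ∃ h, (∀ g ∉ S, g ≤ h) ∧ PF S = insert h (reflectedGaps S h) := by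
  obtain ⟨h, hh, heq⟩ := hAS
  have hsub := PF_subset_insert h hh
  have hPfin : (insert h (reflectedGaps S h ∪ (Sᶜ \ Set.Iic h))).Finite :=
    hS.2.2.subset <| Set.insert_subset hh <| Set.union_subset (fun x hx => hx.1) Set.sdiff_subset
  have hle := Set.ncard_le_ncard hsub hPfin
  have hcount := two_mul_genus_add_one_eq hS hh
  unfold typ at heq
  have hout : Sᶜ \ Set.Iic h = ∅ := (Set.ncard_eq_zero hS.2.2.sdiff).mp (by omega)
  refine ⟨h, fun g hg => by_contra fun hgh => hout.subset ⟨hg, hgh⟩, ?_⟩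
  rw [← Set.union_empty (reflectedGaps S h), ← hout]
  exact Set.eq_of_subset_of_ncard_le hsub (by omega) hPfin

lemma mem_Maximals_of_subset {α : Type*} {le : α → α → Prop} {X Y : Set α} {x : α}
    (hYX : Y ⊆ X) (hx : x ∈ Maximals le X) (hxY : x ∈ Y) : x ∈ Maximals le Y :=
  ⟨hxY, fun y hy => hx.2 y (hYX hy)⟩

lemma add_mem_Maximals_Ap {f n : Fin d → ℕ} (hf : f ∈ PF S) (hn : n ∈ S) (hn0 : n ≠ 0) :
    f + n ∈ Maximals (leS S) (Ap S n) := by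
  refine ⟨⟨hf.2 n hn hn0, fun ⟨u, hu, hun⟩ => hf.1 (add_right_cancel hun ▸ hu)⟩, ?_⟩
  rintro y ⟨-, hyAp⟩ ⟨s, hs, rfl⟩
  by_cases hs0 : s = 0
  · rw [hs0, add_zero]
  · exact (hyAp ⟨f + s, hf.2 s hs hs0, add_right_comm f s n⟩).elim

lemma exists_add_eq_of_mem_Maximals_Ap (hS : IsGNS S) {n x s : Fin d → ℕ}
    (hx : x ∈ Maximals (leS S) (Ap S n)) (hs : s ∈ S) (hs0 : s ≠ 0) :
    ∃ u ∈ S, u + n = x + s := by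
  by_contra hAp
  exact hs0 (add_eq_left.mp (hx.2 (x + s) ⟨hS.2.1 _ _ hx.1.1 hs, hAp⟩ ⟨s, hs, rfl⟩).symm)

lemma mem_of_not_le {f s : Fin d → ℕ} (hgaps : ∀ g ∉ S, g ≤ f) (hs : ¬ s ≤ f) : s ∈ S :=
  by_contra fun hc => hs (hgaps s hc)

lemma le_of_mem_Maximals_Ap (hS : IsGNS S) {f n x : Fin d → ℕ} (hf : f ∉ S)
    (hgaps : ∀ g ∉ S, g ≤ f) (hx : x ∈ Maximals (leS S) (Ap S n)) : n ≤ x := by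
  have key : ∀ s, ¬ s ≤ f → ∃ u ∈ S, u + n = x + s := fun s hs =>
    exists_add_eq_of_mem_Maximals_Ap hS hx (mem_of_not_le hgaps hs)
      (by rintro rfl; exact hs fun i => Nat.zero_le _)
  refine fun i => Nat.le_of_not_lt fun hlt => ?_
  by_cases hj : ∃ j, j ≠ i
  · obtain ⟨j, hji⟩ := hj
    obtain ⟨u, -, hu⟩ := key (Pi.single j (f j + 1)) fun hc => by simpa using hc j
    have := congrFun hu i
    rw [Pi.add_apply, Pi.add_apply, Pi.single_eq_of_ne hji.symm] at this
    omega
  · push Not at hj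
    -- with a single coordinate, `x + (f + n - x) = f + n`, so `f = u ∈ S`
    obtain ⟨u, hu, hun⟩ := key (f + n - x) fun hc => by
      have : f i + n i - x i ≤ f i := hc i
      omega
    have hxs : x + (f + n - x) = f + n := funext fun k => by
      obtain rfl := hj k
      simp only [Pi.add_apply, Pi.sub_apply]
      omega
    rw [hxs] at hun
    exact hf (add_right_cancel hun ▸ hu)

lemma sub_mem_PF_of_mem_Maximals_Ap (hS : IsGNS S) {n x : Fin d → ℕ}
    (hx : x ∈ Maximals (leS S) (Ap S n)) (hnx : n ≤ x) : x - n ∈ PF S := by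
  refine ⟨fun hc => hx.1.2 ⟨x - n, hc, tsub_add_cancel_of_le hnx⟩, fun s hs hs0 => ?_⟩
  obtain ⟨u, hu, hun⟩ := exists_add_eq_of_mem_Maximals_Ap hS hx hs hs0
  rwa [tsub_add_eq_add_tsub hnx, ← hun, add_tsub_cancel_right]

lemma Maximals_Ap_eq_image_PF (hS : IsGNS S) {f n : Fin d → ℕ} (hf : f ∉ S)
    (hgaps : ∀ g ∉ S, g ≤ f) (hn : n ∈ S) (hn0 : n ≠ 0) :
    Maximals (leS S) (Ap S n) = (· + n) '' PF S := by
  ext x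
  constructor
  · intro hx
    have hnx := le_of_mem_Maximals_Ap hS hf hgaps hx
    exact ⟨x - n, sub_mem_PF_of_mem_Maximals_Ap hS hx hnx, tsub_add_cancel_of_le hnx⟩
  · rintro ⟨f', hf', rfl⟩
    exact add_mem_Maximals_Ap hf' hn hn0

lemma mem_image_PF_of_mem_Maximals_Cred {h n x : Fin d → ℕ} (hh : h ∈ PF S)
    (hgaps : ∀ g ∉ S, g ≤ h) (hL : reflectedGaps S h ⊆ PF S) (hn : n ∈ S) (hn0 : n ≠ 0)
    (hx : x ∈ Maximals (leS S) (Cred S n)) : x ∈ (· + n) '' PF S := by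
  obtain ⟨⟨hxAp, h', hh', hxh'⟩, hmax⟩ := hx
  have hxh : x ≤ h + n := hxh'.trans (add_le_add_left (hgaps h' hh') n)
  by_cases hw : h + n - x ∈ S
  · have hhn : h + n ∈ Cred S n := ⟨(add_mem_Maximals_Ap hh hn hn0).1, h, hh.1, le_rfl⟩
    obtain rfl := hmax (h + n) hhn ⟨h + n - x, hw, add_tsub_cancel_of_le hxh⟩
    exact ⟨h, hh, rfl⟩
  · -- `x = v + n` with `v = h - (h + n - x)`, a gap (as `x ∈ Ap`) reflected to the gap `h + n - x`
    have hwh := hgaps _ hw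
    have hvn : h - (h + n - x) + n = x := funext fun i => by
      have hxi : x i ≤ h i + n i := hxh i
      have hwi : h i + n i - x i ≤ h i := hwh i
      show h i - (h i + n i - x i) + n i = x i
      omega
    have hv : h - (h + n - x) ∉ S := fun hc => hxAp.2 ⟨_, hc, hvn⟩
    refine ⟨_, hL ⟨hv, tsub_le_self, ?_⟩, hvn⟩
    rwa [tsub_tsub_cancel_of_le hwh]

theorem statement13_general (d : ℕ) (S : Set (Fin d → ℕ)) (hS : IsGNS S)
    (hAS : AlmostSymmetric S) (n : Fin d → ℕ) (hn : n ∈ S) (hn0 : n ≠ 0) :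
    Maximals (leS S) (Ap S n) = Maximals (leS S) (Cred S n) := by
  obtain ⟨h, hgaps, hPF⟩ := hAS.exists_PF_eq_insert hS
  have hh : h ∈ PF S := hPF ▸ Set.mem_insert h _
  have hL : reflectedGaps S h ⊆ PF S := hPF ▸ Set.subset_insert h _
  rw [Maximals_Ap_eq_image_PF hS hh.1 hgaps hn hn0]
  apply subset_antisymm
  · rintro _ ⟨f, hf, rfl⟩
    have hmax := add_mem_Maximals_Ap hf hn hn0
    exact mem_Maximals_of_subset (fun _ hy => hy.1) hmax
      ⟨hmax.1, h, hh.1, add_le_add_left (hgaps f hf.1) n⟩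
  · exact fun x hx => mem_image_PF_of_mem_Maximals_Cred hh hgaps hL hn hn0 hx

/-- for an almost symmetric GNS,
`Maximals_{≤_S} Ap(S,n) = Maximals_{≤_S} C(S,n)`. -/
theorem statement13 (d : ℕ) (hd : 0 < d) (S : Set (Fin d → ℕ)) (hS : IsGNS S)
    (hAS : AlmostSymmetric S) (n : Fin d → ℕ) (hn : n ∈ S) (hn0 : n ≠ 0) :
    Maximals (leS S) (Ap S n) = Maximals (leS S) (Cred S n) :=
  statement13_general d S hS hAS n hn hn0
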